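/- arXiv:2411.16220 — 4 statements merged into one kernel-verified Lean document; each statement's English description precedes it below -/
import Mathlib

section
/- Let σ0, σ1 > 0, μ0 < μ1, and let e* = σ1/(σ0+σ1). Consider minimizing f(π) = σ0²/(1−π) + σ1²/π over π ∈ (0,1) subject to the constraint μ1·π + μ0·(1−π) ≤ c. If e*·μ1 + (1−e*)·μ0 ≤ c, the minimizer is π* = e*; otherwise (assuming c > μ0) the minimizer is π* = (c−μ0)/(μ1−μ0), which lies on the boundary of the constraint set. -/
/-- Per-stratum constrained optimal allocation.  With `σ0, σ1 > 0`, `μ0 < μ1`,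
`e* = σ1/(σ0+σ1)` and the constraint `μ1·π + μ0·(1-π) ≤ c`:
if `e*` is feasible it minimizes `f(π) = σ0^2/(1-π) + σ1^2/π` over the feasible set;
otherwise (when `μ0 < c`) the minimizer is `π* = (c-μ0)/(μ1-μ0)`, which lies on the
boundary of the constraint set. -/
theorem constrained_optimal_allocation (σ0 σ1 μ0 μ1 c : ℝ) (h0 : 0 < σ0) (h1 : 0 < σ1)
    (hμ : μ0 < μ1) :
    (μ1 * (σ1 / (σ0 + σ1)) + μ0 * (1 - σ1 / (σ0 + σ1)) ≤ c →
      ∀ π ∈ Set.Ioo (0 : ℝ) 1, μ1 * π + μ0 * (1 - π) ≤ c →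
        σ0 ^ 2 / (1 - σ1 / (σ0 + σ1)) + σ1 ^ 2 / (σ1 / (σ0 + σ1)) ≤
          σ0 ^ 2 / (1 - π) + σ1 ^ 2 / π) ∧
    (c < μ1 * (σ1 / (σ0 + σ1)) + μ0 * (1 - σ1 / (σ0 + σ1)) → μ0 < c →
      μ1 * ((c - μ0) / (μ1 - μ0)) + μ0 * (1 - (c - μ0) / (μ1 - μ0)) = c ∧
      ∀ π ∈ Set.Ioo (0 : ℝ) 1, μ1 * π + μ0 * (1 - π) ≤ c →
        σ0 ^ 2 / (1 - (c - μ0) / (μ1 - μ0)) + σ1 ^ 2 / ((c - μ0) / (μ1 - μ0)) ≤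
          σ0 ^ 2 / (1 - π) + σ1 ^ 2 / π) := by
  set e := σ1 / (σ0 + σ1) with he
  have hs : 0 < σ0 + σ1 := by linarith
  have he0 : 0 < e := by positivity
  have he1 : e < 1 := by rw [he, div_lt_one hs]; linarith
  have hfe : σ0 ^ 2 / (1 - e) + σ1 ^ 2 / e = (σ0 + σ1) ^ 2 := by
    rw [he]
    field_simp
    rw [add_sub_cancel_right, pow_two, mul_self_div_self]
  constructor
  · intro _ π hπ _
    obtain ⟨hπ0, hπ1⟩ := hπ
    rw [hfe, div_add_div _ _ (ne_of_gt (by linarith : (0:ℝ) < 1 - π)) (ne_of_gt hπ0),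
        le_div_iff₀ (by nlinarith)]
    nlinarith [sq_nonneg (σ0 * π - σ1 * (1 - π))]
  · intro hc hμ0c
    have hμd : (0:ℝ) < μ1 - μ0 := by linarith
    set b := (c - μ0) / (μ1 - μ0) with hb
    have hbeq : μ1 * b + μ0 * (1 - b) = c := by
      rw [hb]; field_simp; ring
    refine ⟨hbeq, ?_⟩
    have hb0 : 0 < b := div_pos (by linarith) hμd
    have hbe : b < e := by
      rw [hb, div_lt_iff₀ hμd]
      nlinarith
    have hb1 : b < 1 := hbe.trans he1
    intro π hπ hπc
    obtain ⟨hπ0, hπ1⟩ := hπ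
    have hπb : π ≤ b := by
      rw [hb, le_div_iff₀ hμd]; nlinarith
    have hA : σ0 * b < σ1 * (1 - b) := by
      have := hbe
      rw [he, lt_div_iff₀ hs] at this
      nlinarith
    have hB : σ0 * π < σ1 * (1 - π) := by
      have hπe : π < e := lt_of_le_of_lt hπb hbe
      rw [he, lt_div_iff₀ hs] at hπe
      nlinarith
    have key : (σ0 * b) * (σ0 * π) ≤ (σ1 * (1 - b)) * (σ1 * (1 - π)) :=
      mul_le_mul hA.le hB.le (by positivity) (mul_nonneg h1.le (by linarith))
    rw [div_add_div _ _ (ne_of_gt (by linarith : (0:ℝ) < 1 - b)) (ne_of_gt hb0),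
        div_add_div _ _ (ne_of_gt (by linarith : (0:ℝ) < 1 - π)) (ne_of_gt hπ0),
        div_le_div_iff₀ (by nlinarith) (by nlinarith)]
    nlinarith [mul_nonneg (sub_nonneg.2 hπb) (sub_nonneg.2 key)]
end

section
/- For the DBCD allocation function g with γ ≥ 0 and fixed y ∈ (0,1), the map x ↦ g(x,y) is nonincreasing on (0,1); moreover if x < y then g(x,y) ≥ y and if x > y then g(x,y) ≤ y. -/
/-- The Hu–Zhang DBCD allocation function. -/
noncomputable def dbcd (γ x y : ℝ) : ℝ :=
  if x = 0 then 1
  else if x = 1 then 0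
  else y * (y / x) ^ γ /
    (y * (y / x) ^ γ + (1 - y) * ((1 - y) / (1 - x)) ^ γ)

lemma dbcd_eq (γ y x : ℝ) (hy : y ∈ Set.Ioo (0 : ℝ) 1) (hx : x ∈ Set.Ioo (0 : ℝ) 1) :
    dbcd γ x y = (1 + ((1 - y) / y) * ((x * (1 - y)) / ((1 - x) * y)) ^ γ)⁻¹ := by
  obtain ⟨hx0, hx1⟩ := hx
  obtain ⟨hy0, hy1⟩ := hy
  have hx1' : (0:ℝ) < 1 - x := by linarith
  have hy1' : (0:ℝ) < 1 - y := by linarith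
  have ha : (0:ℝ) < (y / x) ^ γ := Real.rpow_pos_of_pos (div_pos hy0 hx0) _
  have hb : (0:ℝ) < ((1 - y) / (1 - x)) ^ γ := Real.rpow_pos_of_pos (div_pos hy1' hx1') _
  rw [dbcd, if_neg (ne_of_gt hx0), if_neg (ne_of_lt hx1)]
  have hbase : (x * (1 - y)) / ((1 - x) * y) = ((1 - y) / (1 - x)) / (y / x) := by
    field_simp
  have e1 : (((1 - y) / (1 - x)) / (y / x)) ^ γ
      = ((1 - y) / (1 - x)) ^ γ / (y / x) ^ γ :=
    Real.div_rpow (le_of_lt (div_pos hy1' hx1')) (le_of_lt (div_pos hy0 hx0)) γ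
  rw [hbase, e1]
  field_simp

/-- For `γ ≥ 0` and fixed target `y ∈ (0,1)`, `x ↦ g(x,y)` is nonincreasing
on `(0,1)`; moreover `g(x,y) ≥ y` when `x < y` and `g(x,y) ≤ y` when `x > y`. -/
theorem dbcd_antitone_and_pushes_to_target (γ y : ℝ) (hγ : 0 ≤ γ)
    (hy : y ∈ Set.Ioo (0 : ℝ) 1) :
    AntitoneOn (fun x => dbcd γ x y) (Set.Ioo (0 : ℝ) 1) ∧
    (∀ x ∈ Set.Ioo (0 : ℝ) 1, x < y → y ≤ dbcd γ x y) ∧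
    (∀ x ∈ Set.Ioo (0 : ℝ) 1, y < x → dbcd γ x y ≤ y) := by
  obtain ⟨hy0, hy1⟩ := hy
  have hy1' : (0:ℝ) < 1 - y := by linarith
  have hrpos : ∀ x ∈ Set.Ioo (0:ℝ) 1,
      0 < ((1 - y) / y) * ((x * (1 - y)) / ((1 - x) * y)) ^ γ := by
    intro x ⟨hx0, hx1⟩
    exact mul_pos (div_pos hy1' hy0)
      (Real.rpow_pos_of_pos (div_pos (mul_pos hx0 hy1') (mul_pos (by linarith) hy0)) _)
  have hyinv : (1:ℝ) + (1 - y) / y = y⁻¹ := by field_simp; ring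
  constructor
  · intro x1 hx1 x2 hx2 hle
    show dbcd γ x2 y ≤ dbcd γ x1 y
    rw [dbcd_eq γ y x1 ⟨hy0, hy1⟩ hx1, dbcd_eq γ y x2 ⟨hy0, hy1⟩ hx2]
    have h1 := hrpos x1 hx1
    have h2 := hrpos x2 hx2
    apply inv_anti₀ (by linarith)
    have hbase : (x1 * (1 - y)) / ((1 - x1) * y) ≤ (x2 * (1 - y)) / ((1 - x2) * y) := by
      rw [div_le_div_iff₀ (mul_pos (by linarith [hx1.2]) hy0) (mul_pos (by linarith [hx2.2]) hy0)]
      nlinarith [mul_nonneg (mul_pos hy0 hy1').le (sub_nonneg.mpr hle)]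
    have h3 := Real.rpow_le_rpow
      (le_of_lt (div_pos (mul_pos hx1.1 hy1') (mul_pos (by linarith [hx1.2]) hy0))) hbase hγ
    have h4 := mul_le_mul_of_nonneg_left h3 (le_of_lt (div_pos hy1' hy0))
    linarith
  constructor
  · intro x hx hxy
    rw [dbcd_eq γ y x ⟨hy0, hy1⟩ hx]
    have h1 := hrpos x hx
    have hbase : (x * (1 - y)) / ((1 - x) * y) ≤ 1 := by
      rw [div_le_one (mul_pos (by linarith [hx.2]) hy0)]
      nlinarith [hx.1, hx.2]
    have hpow : ((x * (1 - y)) / ((1 - x) * y)) ^ γ ≤ 1 :=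
      Real.rpow_le_one
        (le_of_lt (div_pos (mul_pos hx.1 hy1') (mul_pos (by linarith [hx.2]) hy0))) hbase hγ
    have hr : ((1 - y) / y) * ((x * (1 - y)) / ((1 - x) * y)) ^ γ ≤ (1 - y) / y := by
      nlinarith [div_pos hy1' hy0]
    have key : 1 + ((1 - y) / y) * ((x * (1 - y)) / ((1 - x) * y)) ^ γ ≤ y⁻¹ := by
      rw [← hyinv]; linarith
    have := inv_anti₀ (by linarith) key
    simpa using this
  · intro x hx hxy
    rw [dbcd_eq γ y x ⟨hy0, hy1⟩ hx]
    have h1 := hrpos x hx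
    have hbase : (1:ℝ) ≤ (x * (1 - y)) / ((1 - x) * y) := by
      rw [le_div_iff₀ (mul_pos (by linarith [hx.2]) hy0)]
      nlinarith [hx.1, hx.2]
    have hpow : (1:ℝ) ≤ ((x * (1 - y)) / ((1 - x) * y)) ^ γ :=
      Real.one_le_rpow hbase hγ
    have hr : (1 - y) / y ≤ ((1 - y) / y) * ((x * (1 - y)) / ((1 - x) * y)) ^ γ := by
      nlinarith [div_pos hy1' hy0]
    have key : y⁻¹ ≤ 1 + ((1 - y) / y) * ((x * (1 - y)) / ((1 - x) * y)) ^ γ := by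
      rw [← hyinv]; linarith
    have := inv_anti₀ (by positivity) key
    simpa using this
end

section
/- Let X be a random variable taking finitely many values with P(X=x) = p(x) > 0, and let μ(x,w), σ(x,w) > 0 be given for w ∈ {0,1}. Among all functions π: 𝒳 → (0,1), the quantity Var(μ(X,1)−μ(X,0)) + E[σ²(X,0)/(1−π(X))] + E[σ²(X,1)/π(X)] is uniquely minimized by π(x) = σ(x,1)/(σ(x,0)+σ(x,1)), and the minimum value is Var(μ(X,1)−μ(X,0)) + E[(σ(X,0)+σ(X,1))²]. -/
lemma key_eq (a b t : ℝ) (ht : 0 < t) (ht1 : t < 1) :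
    a^2/(1-t) + b^2/t = (a+b)^2 + ((a+b)*t-b)^2/(t*(1-t)) := by
  have h1 : (1 - t) ≠ 0 := by linarith
  have h2 : t ≠ 0 := ne_of_gt ht
  field_simp
  ring

lemma key_le (a b t : ℝ) (ht : 0 < t) (ht1 : t < 1) :
    (a+b)^2 ≤ a^2/(1-t) + b^2/t := by
  rw [key_eq a b t ht ht1]
  have : 0 ≤ ((a+b)*t-b)^2/(t*(1-t)) :=
    div_nonneg (sq_nonneg _) (by nlinarith)
  linarith

lemma key_lt (a b t : ℝ) (hab : 0 < a + b) (ht : 0 < t) (ht1 : t < 1)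
    (hne : t ≠ b / (a+b)) :
    (a+b)^2 < a^2/(1-t) + b^2/t := by
  rw [key_eq a b t ht ht1]
  have hnum : (a+b)*t - b ≠ 0 := by
    intro h
    apply hne
    field_simp
    linarith
  have : 0 < ((a+b)*t-b)^2/(t*(1-t)) :=
    div_pos (by positivity) (by nlinarith)
  linarith

/-- Hahn's (1998) efficiency bound as a function of the propensity `π(·)`, for a
finite covariate space with weights `p(x) > 0` summing to 1, is uniquely minimized
by the covariate-wise Neyman allocation `π*(x) = σ(x,1)/(σ(x,0)+σ(x,1))`, with
minimum value `V + Σ_x p(x)(σ(x,0)+σ(x,1))²` (here `V = Var(μ(X,1)-μ(X,0))`). -/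
theorem hahn_bound_minimized_by_neyman
    {𝒳 : Type*} [Fintype 𝒳] (p : 𝒳 → ℝ) (hp : ∀ x, 0 < p x)
    (hsum : ∑ x, p x = 1) (σ : 𝒳 → Fin 2 → ℝ) (hσ : ∀ x w, 0 < σ x w) (V : ℝ) :
    (V + ∑ x, p x * ((σ x 0) ^ 2 / (1 - σ x 1 / (σ x 0 + σ x 1)) +
        (σ x 1) ^ 2 / (σ x 1 / (σ x 0 + σ x 1))) =
      V + ∑ x, p x * (σ x 0 + σ x 1) ^ 2) ∧
    ∀ π : 𝒳 → ℝ, (∀ x, π x ∈ Set.Ioo (0 : ℝ) 1) →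
      π ≠ (fun x => σ x 1 / (σ x 0 + σ x 1)) →
      V + ∑ x, p x * (σ x 0 + σ x 1) ^ 2 <
        V + ∑ x, p x * ((σ x 0) ^ 2 / (1 - π x) + (σ x 1) ^ 2 / (π x)) := by
  constructor
  · congr 1
    apply Finset.sum_congr rfl
    intro x _
    have h0 := hσ x 0
    have h1 := hσ x 1
    have hs : σ x 0 + σ x 1 ≠ 0 := by positivity
    have h1t : 1 - σ x 1 / (σ x 0 + σ x 1) = σ x 0 / (σ x 0 + σ x 1) := by
      field_simp
      ring
    rw [h1t]
    have h0' : σ x 0 ≠ 0 := ne_of_gt h0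
    have h1' : σ x 1 ≠ 0 := ne_of_gt h1
    field_simp
  · intro π hπ hne
    have hlt : ∑ x, p x * (σ x 0 + σ x 1) ^ 2 <
        ∑ x, p x * ((σ x 0) ^ 2 / (1 - π x) + (σ x 1) ^ 2 / (π x)) := by
      obtain ⟨x0, hx0⟩ := Function.ne_iff.mp hne
      apply Finset.sum_lt_sum
      · intro x _
        have := key_le (σ x 0) (σ x 1) (π x) (hπ x).1 (hπ x).2
        exact mul_le_mul_of_nonneg_left this (le_of_lt (hp x))
      · refine ⟨x0, Finset.mem_univ _, ?_⟩
        have hab : 0 < σ x0 0 + σ x0 1 := by have := hσ x0 0; have := hσ x0 1; linarith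
        have := key_lt (σ x0 0) (σ x0 1) (π x0) hab (hπ x0).1 (hπ x0).2 hx0
        exact mul_lt_mul_of_pos_left this (hp x0)
    linarith
end

section
/- Fix x with ρ_x ∈ (0,1). Let Wᵢ ∈ {0,1} be treatment indicators adapted to a filtration (𝒢_{i−1}) with E[Wᵢ | 𝒢_{i−1}] → ρ_x a.s., and let Ỹᵢ(1), Ỹᵢ(0) be mean-zero, square-integrable, with Ỹᵢ(w) independent of 𝒢_{i−1} given Xᵢ = x and Var(Ỹᵢ(w)) = σ²(x,w). Define ΔQ_{i(1)} = (Wᵢ/ρ_x)·Ỹᵢ(1) and ΔQ_{i(0)} = ((1−Wᵢ)/(1−ρ_x))·Ỹᵢ(0). Then Cov(ΔQ_{i(1)}, ΔQ_{i(0)} | 𝒢_{i−1}) = 0, and (1/n)Σᵢ Var(ΔQ_{i(1)} − ΔQ_{i(0)} | 𝒢_{i−1}) → σ²(x,1)/ρ_x + σ²(x,0)/(1−ρ_x) almost surely. -/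
/-!
Since `W ∈ {0, 1}`, `W (1 - W) = 0` and `W² = W`. Hence `ΔQ₁ ΔQ₀` vanishes identically, and
`(ΔQ₁ - ΔQ₀)² = W Y₁² / ρ² + (1 - W) Y₀² / (1 - ρ)²` has no cross term. With the conditional
mean zero and the conditional second moments, the `i`-th conditional variance is
`σ₁² pᵢ / ρ² + σ₀² (1 - pᵢ) / (1 - ρ)²` where `pᵢ = E[Wᵢ | 𝒢ᵢ₋₁] → ρ`, so the summands converge
to `σ₁² / ρ + σ₀² / (1 - ρ)` and so do their Cesàro means.

Integrability of `Wᵢ`, needed to split the conditional expectations, holds for large `i`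
because `pᵢ → ρ ≠ 0`, while the conditional expectation of a non-integrable function is `0`.
-/

open MeasureTheory ProbabilityTheory Filter Topology

section ZeroOne

variable {w : ℝ}

lemma mul_div_mul_one_sub_div_mul_eq_zero (hw : w = 0 ∨ w = 1) (ρ a b : ℝ) :
    w / ρ * a * ((1 - w) / (1 - ρ) * b) = 0 := by
  rcases hw with rfl | rfl <;> ring

lemma sq_div_mul_sub_one_sub_div_mul (hw : w = 0 ∨ w = 1) (ρ a b : ℝ) :
    (w / ρ * a - (1 - w) / (1 - ρ) * b) ^ 2
      = (ρ ^ 2)⁻¹ * (w * a ^ 2) + ((1 - ρ) ^ 2)⁻¹ * ((1 - w) * b ^ 2) := by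
  rw [← inv_pow, ← inv_pow]
  rcases hw with rfl | rfl <;> ring

lemma one_sub_eq_zero_or_eq_one (hw : w = 0 ∨ w = 1) : 1 - w = 0 ∨ 1 - w = 1 := by
  rcases hw with rfl | rfl <;> norm_num

end ZeroOne

lemma tendsto_div_sq_mul_add_div_sq_mul_one_sub {p : ℕ → ℝ} {ρ : ℝ} (hρ₀ : ρ ≠ 0) (hρ₁ : 1 - ρ ≠ 0)
    (hp : Tendsto p atTop (𝓝 ρ)) (σ1sq σ0sq : ℝ) :
    Tendsto (fun i => σ1sq / ρ ^ 2 * p i + σ0sq / (1 - ρ) ^ 2 * (1 - p i)) atTop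
      (𝓝 (σ1sq / ρ + σ0sq / (1 - ρ))) := by
  have hlim : σ1sq / ρ + σ0sq / (1 - ρ) = σ1sq / ρ ^ 2 * ρ + σ0sq / (1 - ρ) ^ 2 * (1 - ρ) := by
    field_simp
  rw [hlim]
  exact (hp.const_mul _).add ((tendsto_const_nhds.sub hp).const_mul _)

namespace MeasureTheory

variable {Ω : Type*} {m₀ : MeasurableSpace Ω} {μ : Measure Ω}

lemma ae_eventually_of_eventually_ae {ι : Type*} [Countable ι] {l : Filter ι} {P : ι → Ω → Prop}
    (h : ∀ᶠ i in l, ∀ᵐ ω ∂μ, P i ω) : ∀ᵐ ω ∂μ, ∀ᶠ i in l, P i ω := by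
  obtain ⟨S, hS, hP⟩ := h.exists_mem
  have hall : ∀ᵐ ω ∂μ, ∀ i, i ∈ S → P i ω := ae_all_iff.2 fun i => by
    by_cases hi : i ∈ S
    · exact (hP i hi).mono fun _ h _ => h
    · exact ae_of_all _ fun _ h => absurd h hi
  filter_upwards [hall] with ω hω using mem_of_superset hS hω

lemma eventually_integrable_of_tendsto_condExp {f : ℕ → Ω → ℝ} {m : ℕ → MeasurableSpace Ω}
    {ω : Ω} {c : ℝ} (hc : c ≠ 0) (h : Tendsto (fun i => μ[f i | m i] ω) atTop (𝓝 c)) :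
    ∀ᶠ i in atTop, Integrable (f i) μ := by
  filter_upwards [h.eventually_ne hc] with i hi
  by_contra hf
  exact hi (by rw [condExp_of_not_integrable hf]; rfl)

lemma Integrable.mul_of_eq_zero_or_eq_one {w g : Ω → ℝ} (hg : Integrable g μ)
    (hw : AEStronglyMeasurable w μ) (hw01 : ∀ ω, w ω = 0 ∨ w ω = 1) :
    Integrable (fun ω => w ω * g ω) μ :=
  hg.bdd_mul (c := 1) hw (ae_of_all _ fun ω => by rcases hw01 ω with h | h <;> simp [h])

variable {m : MeasurableSpace Ω}

lemma condExp_mul_sub_condExp_mul_condExp_eq_zero {X Y : Ω → ℝ} (hXY : ∀ ω, X ω * Y ω = 0)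
    (hX : μ[X | m] =ᵐ[μ] 0) :
    (fun ω => μ[fun ω' => X ω' * Y ω' | m] ω - μ[X | m] ω * μ[Y | m] ω) =ᵐ[μ] 0 := by
  have hprod : (fun ω' => X ω' * Y ω') = 0 := funext hXY
  rw [hprod, condExp_zero]
  filter_upwards [hX] with ω hω
  simp [hω]

lemma condExp_div_mul_eq_zero {f g : Ω → ℝ} (c : ℝ)
    (h : μ[fun ω => f ω * g ω | m] =ᵐ[μ] 0) : μ[fun ω => f ω / c * g ω | m] =ᵐ[μ] 0 := by
  have hsmul : (fun ω => f ω / c * g ω) = c⁻¹ • fun ω => f ω * g ω := by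
    funext ω; simp only [Pi.smul_apply, smul_eq_mul]; ring
  rw [hsmul]
  filter_upwards [condExp_smul c⁻¹ (fun ω => f ω * g ω) m, h] with ω hc h
  simp [hc, h]

/- `ipw_diff` names the inverse-probability-weighted difference
`ΔQ₁ - ΔQ₀ = W / ρ * Y1 - (1 - W) / (1 - ρ) * Y0`. -/
lemma condExp_ipw_diff_ae_eq_zero [IsFiniteMeasure μ] {W Y1 Y0 : Ω → ℝ}
    (hWi : Integrable W μ) (hW : ∀ ω, W ω = 0 ∨ W ω = 1)
    (hY1 : MemLp Y1 2 μ) (hY0 : MemLp Y0 2 μ)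
    (hmean1 : μ[fun ω => W ω * Y1 ω | m] =ᵐ[μ] 0)
    (hmean0 : μ[fun ω => (1 - W ω) * Y0 ω | m] =ᵐ[μ] 0) (ρ : ℝ) :
    μ[fun ω => W ω / ρ * Y1 ω - (1 - W ω) / (1 - ρ) * Y0 ω | m] =ᵐ[μ] 0 := by
  have hI1 : Integrable (fun ω => W ω / ρ * Y1 ω) μ :=
    ((hY1.integrable one_le_two).mul_of_eq_zero_or_eq_one hWi.1 hW).const_mul ρ⁻¹
      |>.congr (ae_of_all _ fun ω => by ring)
  have hI0 : Integrable (fun ω => (1 - W ω) / (1 - ρ) * Y0 ω) μ :=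
    ((hY0.integrable one_le_two).mul_of_eq_zero_or_eq_one (aestronglyMeasurable_const.sub hWi.1)
      fun ω => one_sub_eq_zero_or_eq_one (hW ω)).const_mul (1 - ρ)⁻¹
      |>.congr (ae_of_all _ fun ω => by simp only [Pi.sub_apply]; ring)
  filter_upwards [condExp_sub hI1 hI0 m, condExp_div_mul_eq_zero ρ hmean1,
    condExp_div_mul_eq_zero (1 - ρ) hmean0] with ω hsub h1 h0
  exact hsub.trans (by simp [h1, h0])

lemma condExp_sq_ipw_diff_ae_eq {W Y1 Y0 : Ω → ℝ} {σ1sq σ0sq : ℝ}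
    (hWi : Integrable W μ) (hW : ∀ ω, W ω = 0 ∨ W ω = 1)
    (hY1 : MemLp Y1 2 μ) (hY0 : MemLp Y0 2 μ)
    (hsec1 : μ[fun ω => W ω * Y1 ω ^ 2 | m] =ᵐ[μ] fun ω => σ1sq * μ[W | m] ω)
    (hsec0 : μ[fun ω => (1 - W ω) * Y0 ω ^ 2 | m] =ᵐ[μ] fun ω => σ0sq * (1 - μ[W | m] ω))
    (ρ : ℝ) :
    μ[fun ω => (W ω / ρ * Y1 ω - (1 - W ω) / (1 - ρ) * Y0 ω) ^ 2 | m]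
      =ᵐ[μ] fun ω => σ1sq / ρ ^ 2 * μ[W | m] ω + σ0sq / (1 - ρ) ^ 2 * (1 - μ[W | m] ω) := by
  have hI1 : Integrable (fun ω => W ω * Y1 ω ^ 2) μ :=
    hY1.integrable_sq.mul_of_eq_zero_or_eq_one hWi.1 hW
  have hI0 : Integrable (fun ω => (1 - W ω) * Y0 ω ^ 2) μ :=
    hY0.integrable_sq.mul_of_eq_zero_or_eq_one (aestronglyMeasurable_const.sub hWi.1)
      fun ω => one_sub_eq_zero_or_eq_one (hW ω)
  have hsplit : (fun ω => (W ω / ρ * Y1 ω - (1 - W ω) / (1 - ρ) * Y0 ω) ^ 2)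
      = (ρ ^ 2)⁻¹ • (fun ω => W ω * Y1 ω ^ 2)
        + ((1 - ρ) ^ 2)⁻¹ • fun ω => (1 - W ω) * Y0 ω ^ 2 := by
    funext ω
    exact sq_div_mul_sub_one_sub_div_mul (hW ω) ρ _ _
  rw [hsplit]
  filter_upwards [condExp_add (hI1.smul ((ρ ^ 2)⁻¹)) (hI0.smul (((1 - ρ) ^ 2)⁻¹)) m,
    condExp_smul ((ρ ^ 2)⁻¹) (fun ω => W ω * Y1 ω ^ 2) m,
    condExp_smul (((1 - ρ) ^ 2)⁻¹) (fun ω => (1 - W ω) * Y0 ω ^ 2) m, hsec1, hsec0]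
    with ω hadd h1 h0 hs1 hs0
  simp only [Pi.add_apply, Pi.smul_apply, smul_eq_mul] at hadd h1 h0
  rw [hadd, h1, h0, hs1, hs0]
  ring

lemma condExp_sq_sub_sq_condExp_ipw_diff_ae_eq [IsFiniteMeasure μ] {W Y1 Y0 : Ω → ℝ} {σ1sq σ0sq : ℝ}
    (hWi : Integrable W μ) (hW : ∀ ω, W ω = 0 ∨ W ω = 1)
    (hY1 : MemLp Y1 2 μ) (hY0 : MemLp Y0 2 μ)
    (hmean1 : μ[fun ω => W ω * Y1 ω | m] =ᵐ[μ] 0)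
    (hmean0 : μ[fun ω => (1 - W ω) * Y0 ω | m] =ᵐ[μ] 0)
    (hsec1 : μ[fun ω => W ω * Y1 ω ^ 2 | m] =ᵐ[μ] fun ω => σ1sq * μ[W | m] ω)
    (hsec0 : μ[fun ω => (1 - W ω) * Y0 ω ^ 2 | m] =ᵐ[μ] fun ω => σ0sq * (1 - μ[W | m] ω))
    (ρ : ℝ) :
    (fun ω => μ[fun ω' => (W ω' / ρ * Y1 ω' - (1 - W ω') / (1 - ρ) * Y0 ω') ^ 2 | m] ω -
        (μ[fun ω' => W ω' / ρ * Y1 ω' - (1 - W ω') / (1 - ρ) * Y0 ω' | m] ω) ^ 2)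
      =ᵐ[μ] fun ω => σ1sq / ρ ^ 2 * μ[W | m] ω + σ0sq / (1 - ρ) ^ 2 * (1 - μ[W | m] ω) := by
  filter_upwards [condExp_sq_ipw_diff_ae_eq hWi hW hY1 hY0 hsec1 hsec0 ρ,
    condExp_ipw_diff_ae_eq_zero hWi hW hY1 hY0 hmean1 hmean0 ρ] with ω hsq hmean
  simp [hsq, hmean]

end MeasureTheory

theorem cadbcd_conditional_variance_general
    {Ω : Type*} [m : MeasurableSpace Ω] (μ : Measure Ω) [IsProbabilityMeasure μ]
    (𝒢 : ℕ → MeasurableSpace Ω)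
    (W : ℕ → Ω → ℝ) (hW01 : ∀ i ω, W i ω = 0 ∨ W i ω = 1)
    (ρ σ1sq σ0sq : ℝ) (hρ : ρ ∈ Set.Ioo (0 : ℝ) 1)
    (Y1 Y0 : ℕ → Ω → ℝ) (hY1 : ∀ i, MemLp (Y1 i) 2 μ) (hY0 : ∀ i, MemLp (Y0 i) 2 μ)
    -- conditional allocation probabilities converge to the target `ρ` a.s.
    (hWcond : ∀ᵐ ω ∂μ,
      Tendsto (fun i => (μ[W (i + 1) | 𝒢 i]) ω) atTop (nhds ρ))
    -- mean-zero responses, conditionally independent of the past: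
    (hmean1 : ∀ i, μ[fun ω => W (i + 1) ω * Y1 (i + 1) ω | 𝒢 i] =ᵐ[μ] 0)
    (hmean0 : ∀ i, μ[fun ω => (1 - W (i + 1) ω) * Y0 (i + 1) ω | 𝒢 i] =ᵐ[μ] 0)
    -- conditional second moments, from `Var(Ỹᵢ(w)) = σ²(x,w)` and independence:
    (hsec1 : ∀ i, μ[fun ω => W (i + 1) ω * (Y1 (i + 1) ω) ^ 2 | 𝒢 i]
      =ᵐ[μ] fun ω => σ1sq * (μ[W (i + 1) | 𝒢 i]) ω)
    (hsec0 : ∀ i, μ[fun ω => (1 - W (i + 1) ω) * (Y0 (i + 1) ω) ^ 2 | 𝒢 i]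
      =ᵐ[μ] fun ω => σ0sq * (1 - (μ[W (i + 1) | 𝒢 i]) ω)) :
    -- conditional covariance of `ΔQ_{i(1)}` and `ΔQ_{i(0)}` vanishes:
    (∀ i, (fun ω =>
        (μ[fun ω' => (W (i + 1) ω' / ρ * Y1 (i + 1) ω') *
            ((1 - W (i + 1) ω') / (1 - ρ) * Y0 (i + 1) ω') | 𝒢 i]) ω -
        (μ[fun ω' => W (i + 1) ω' / ρ * Y1 (i + 1) ω' | 𝒢 i]) ω *
        (μ[fun ω' => (1 - W (i + 1) ω') / (1 - ρ) * Y0 (i + 1) ω' | 𝒢 i]) ω)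
      =ᵐ[μ] 0) ∧
    -- averaged conditional variances converge a.s.:
    (∀ᵐ ω ∂μ, Tendsto (fun n : ℕ => (1 / (n : ℝ)) * ∑ i ∈ Finset.range n,
        ((μ[fun ω' => (W (i + 1) ω' / ρ * Y1 (i + 1) ω' -
            (1 - W (i + 1) ω') / (1 - ρ) * Y0 (i + 1) ω') ^ 2 | 𝒢 i]) ω -
          ((μ[fun ω' => W (i + 1) ω' / ρ * Y1 (i + 1) ω' -
            (1 - W (i + 1) ω') / (1 - ρ) * Y0 (i + 1) ω' | 𝒢 i]) ω) ^ 2))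
      atTop (nhds (σ1sq / ρ + σ0sq / (1 - ρ)))) := by
  obtain ⟨hρ₀, hρ₁⟩ := hρ
  refine ⟨fun i => condExp_mul_sub_condExp_mul_condExp_eq_zero
    (fun ω => mul_div_mul_one_sub_div_mul_eq_zero (hW01 (i + 1) ω) ρ _ _)
    (condExp_div_mul_eq_zero ρ (hmean1 i)), ?_⟩
  obtain ⟨ω₀, hω₀⟩ := hWcond.exists
  have hWint : ∀ᶠ i in atTop, Integrable (W (i + 1)) μ :=
    eventually_integrable_of_tendsto_condExp (f := fun i => W (i + 1)) hρ₀.ne' hω₀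
  have hvar := ae_eventually_of_eventually_ae <| hWint.mono fun i hi =>
    condExp_sq_sub_sq_condExp_ipw_diff_ae_eq hi (hW01 _) (hY1 _) (hY0 _) (hmean1 i) (hmean0 i)
      (hsec1 i) (hsec0 i) ρ
  filter_upwards [hWcond, hvar] with ω hp hvarω
  have hlim :=
    tendsto_div_sq_mul_add_div_sq_mul_one_sub hρ₀.ne' (sub_ne_zero.2 hρ₁.ne') hp σ1sq σ0sq
  simpa only [one_div] using (hlim.congr' (hvarω.mono fun _ h => h.symm)).cesaro

/-- Conditional variance computation for the martingale difference array in the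
CADBCD proof.  With `ΔQ_{i(1)} = (Wᵢ/ρ)Ỹᵢ(1)` and `ΔQ_{i(0)} = ((1-Wᵢ)/(1-ρ))Ỹᵢ(0)`,
the conditional covariance given `𝒢_{i-1}` vanishes, and the averaged conditional
variances converge a.s. to `σ²(x,1)/ρ + σ²(x,0)/(1-ρ)`. -/
theorem cadbcd_conditional_variance
    {Ω : Type*} [m : MeasurableSpace Ω] (μ : Measure Ω) [IsProbabilityMeasure μ]
    (𝒢 : ℕ → MeasurableSpace Ω) (h𝒢 : ∀ i, 𝒢 i ≤ m)
    (W : ℕ → Ω → ℝ) (hW01 : ∀ i ω, W i ω = 0 ∨ W i ω = 1)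
    (ρ σ1sq σ0sq : ℝ) (hρ : ρ ∈ Set.Ioo (0 : ℝ) 1)
    (hσ1 : 0 ≤ σ1sq) (hσ0 : 0 ≤ σ0sq)
    (Y1 Y0 : ℕ → Ω → ℝ) (hY1 : ∀ i, MemLp (Y1 i) 2 μ) (hY0 : ∀ i, MemLp (Y0 i) 2 μ)
    -- conditional allocation probabilities converge to the target `ρ` a.s.
    (hWcond : ∀ᵐ ω ∂μ,
      Tendsto (fun i => (μ[W (i + 1) | 𝒢 i]) ω) atTop (nhds ρ))
    -- mean-zero responses, conditionally independent of the past: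
    (hmean1 : ∀ i, μ[fun ω => W (i + 1) ω * Y1 (i + 1) ω | 𝒢 i] =ᵐ[μ] 0)
    (hmean0 : ∀ i, μ[fun ω => (1 - W (i + 1) ω) * Y0 (i + 1) ω | 𝒢 i] =ᵐ[μ] 0)
    -- conditional second moments, from `Var(Ỹᵢ(w)) = σ²(x,w)` and independence:
    (hsec1 : ∀ i, μ[fun ω => W (i + 1) ω * (Y1 (i + 1) ω) ^ 2 | 𝒢 i]
      =ᵐ[μ] fun ω => σ1sq * (μ[W (i + 1) | 𝒢 i]) ω)
    (hsec0 : ∀ i, μ[fun ω => (1 - W (i + 1) ω) * (Y0 (i + 1) ω) ^ 2 | 𝒢 i]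
      =ᵐ[μ] fun ω => σ0sq * (1 - (μ[W (i + 1) | 𝒢 i]) ω)) :
    -- conditional covariance of `ΔQ_{i(1)}` and `ΔQ_{i(0)}` vanishes:
    (∀ i, (fun ω =>
        (μ[fun ω' => (W (i + 1) ω' / ρ * Y1 (i + 1) ω') *
            ((1 - W (i + 1) ω') / (1 - ρ) * Y0 (i + 1) ω') | 𝒢 i]) ω -
        (μ[fun ω' => W (i + 1) ω' / ρ * Y1 (i + 1) ω' | 𝒢 i]) ω *
        (μ[fun ω' => (1 - W (i + 1) ω') / (1 - ρ) * Y0 (i + 1) ω' | 𝒢 i]) ω)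
      =ᵐ[μ] 0) ∧
    -- averaged conditional variances converge a.s.:
    (∀ᵐ ω ∂μ, Tendsto (fun n : ℕ => (1 / (n : ℝ)) * ∑ i ∈ Finset.range n,
        ((μ[fun ω' => (W (i + 1) ω' / ρ * Y1 (i + 1) ω' -
            (1 - W (i + 1) ω') / (1 - ρ) * Y0 (i + 1) ω') ^ 2 | 𝒢 i]) ω -
          ((μ[fun ω' => W (i + 1) ω' / ρ * Y1 (i + 1) ω' -
            (1 - W (i + 1) ω') / (1 - ρ) * Y0 (i + 1) ω' | 𝒢 i]) ω) ^ 2))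
      atTop (nhds (σ1sq / ρ + σ0sq / (1 - ρ)))) :=
  cadbcd_conditional_variance_general (m := m) μ 𝒢 W hW01 ρ σ1sq σ0sq hρ Y1 Y0 hY1 hY0 hWcond hmean1
    hmean0 hsec1 hsec0
end
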